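/- Let ρ ∈ ℝ and let q : ℝ×ℝ → ℂ be a smooth solution of the nonlocal equation (E). Define Λ₇ := −(i/2)( 2iρ Λ₅ + 2 q Λ₁ Λ₅ + q Λ₃² + ∂ₓΛ₅ ). Then the second conservation law ∂ₜ( q Λ₃ ) = ∂ₓ[ (−q_{xx} − 3i q q̃ q_x + (3/2) q³ q̃² − 2ρ q² q̃ − 4ρ² q) Λ₃ + (2i q_x − 2 q² q̃ − 4ρ q) Λ₅ + 4 q Λ₇ ] holds at every (x,t) ∈ ℝ². -/

import Mathlib

open Complex

/-- Partial derivative in the space variable `x` (first coordinate). -/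
noncomputable def pdx (f : ℝ × ℝ → ℂ) : ℝ × ℝ → ℂ :=
  fun p => deriv (fun x => f (x, p.2)) p.1

/-- Partial derivative in the time variable `t` (second coordinate). -/
noncomputable def pdt (f : ℝ × ℝ → ℂ) : ℝ × ℝ → ℂ :=
  fun p => deriv (fun t => f (p.1, t)) p.2

/-- The reverse space-time reflection `q̃(x,t) = q(-x,-t)`. -/
def tq (q : ℝ × ℝ → ℂ) : ℝ × ℝ → ℂ := fun p => q (-p.1, -p.2)

/-- `q̂₁(x,t) = (∂ₓq)(-x,-t)`. -/
noncomputable def hq1 (q : ℝ × ℝ → ℂ) : ℝ × ℝ → ℂ := fun p => pdx q (-p.1, -p.2)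

/-- `q̂₂(x,t) = (∂ₓ²q)(-x,-t)`. -/
noncomputable def hq2 (q : ℝ × ℝ → ℂ) : ℝ × ℝ → ℂ := fun p => pdx (pdx q) (-p.1, -p.2)

/-- The reverse space-time nonlocal equation (E) at a single point. -/
noncomputable def NonlocalEAt (q : ℝ × ℝ → ℂ) (ρ : ℝ) (p : ℝ × ℝ) : Prop :=
  I * pdt q p + I * pdx (pdx (pdx q)) p
    - 3 * pdx (fun p' => q p' * tq q p' * pdx q p' + (I / 2) * (q p') ^ 3 * (tq q p') ^ 2) p
    + (ρ : ℂ) * (2 * pdx (pdx q) p - 3 * (q p) ^ 3 * (tq q p) ^ 2)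
    + (ρ : ℂ) * (-2 * I * (q p) ^ 2 * hq1 q p + 10 * I * q p * tq q p * pdx q p)
    + (ρ : ℂ) ^ 2 * (4 * (q p) ^ 2 * tq q p + 4 * I * pdx q p - 8 * q p)
    + 8 * (ρ : ℂ) ^ 3 * q p = 0

/-- The reverse space-time nonlocal equation (E). -/
noncomputable def NonlocalE (q : ℝ × ℝ → ℂ) (ρ : ℝ) : Prop :=
  ∀ p : ℝ × ℝ, NonlocalEAt q ρ p

/-- The conserved-density coefficient `Λ₁`. -/
noncomputable def L1 (q : ℝ × ℝ → ℂ) : ℝ × ℝ → ℂ := fun p => -(I / 2) * tq q p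

/-- The conserved-density coefficient `Λ₃`. -/
noncomputable def L3 (q : ℝ × ℝ → ℂ) (ρ : ℝ) : ℝ × ℝ → ℂ := fun p =>
  (I / 8) * q p * (tq q p) ^ 2 - (I / 2) * (ρ : ℂ) * tq q p + (1 / 4) * hq1 q p

/-- The conserved-density coefficient `Λ₅`. -/
noncomputable def L5 (q : ℝ × ℝ → ℂ) (ρ : ℝ) : ℝ × ℝ → ℂ := fun p =>
  -(I / 16) * (q p) ^ 2 * (tq q p) ^ 3 - (1 / 4) * q p * tq q p * hq1 q p
    + (1 / 16) * pdx q p * (tq q p) ^ 2 + (3 * I / 8) * (ρ : ℂ) * q p * (tq q p) ^ 2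
    + ((ρ : ℂ) / 2) * hq1 q p - (I / 2) * (ρ : ℂ) ^ 2 * tq q p + (I / 8) * hq2 q p

/-- The coefficient `Λ₇`. -/
noncomputable def L7 (q : ℝ × ℝ → ℂ) (ρ : ℝ) : ℝ × ℝ → ℂ := fun p =>
  -(I / 2) * (2 * I * (ρ : ℂ) * L5 q ρ p + 2 * q p * L1 q p * L5 q ρ p
    + q p * (L3 q ρ p) ^ 2 + pdx (L5 q ρ) p)


lemma pdx_mk (f : ℝ × ℝ → ℂ) (x t : ℝ) : pdx f (x, t) = deriv (fun x' => f (x', t)) x := rfl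

lemma pdt_mk (f : ℝ × ℝ → ℂ) (x t : ℝ) : pdt f (x, t) = deriv (fun t' => f (x, t')) t := rfl

lemma hasDerivAt_slice_x (f : ℝ × ℝ → ℂ) (p : ℝ × ℝ) (hf : DifferentiableAt ℝ f p) :
    HasDerivAt (fun x => f (x, p.2)) (fderiv ℝ f p (1, 0)) p.1 := by
  have hg : HasDerivAt (fun x : ℝ => (x, p.2)) ((1 : ℝ), (0 : ℝ)) p.1 :=
    (hasDerivAt_id p.1).prodMk (hasDerivAt_const _ _)
  simpa [Function.comp_def] using hf.hasFDerivAt.comp_hasDerivAt p.1 hg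

lemma hasDerivAt_slice_t (f : ℝ × ℝ → ℂ) (p : ℝ × ℝ) (hf : DifferentiableAt ℝ f p) :
    HasDerivAt (fun t => f (p.1, t)) (fderiv ℝ f p (0, 1)) p.2 := by
  have hg : HasDerivAt (fun t : ℝ => (p.1, t)) ((0 : ℝ), (1 : ℝ)) p.2 :=
    (hasDerivAt_const _ _).prodMk (hasDerivAt_id p.2)
  simpa [Function.comp_def] using hf.hasFDerivAt.comp_hasDerivAt p.2 hg

lemma pdx_eq_fderiv (f : ℝ × ℝ → ℂ) (p : ℝ × ℝ) (hf : DifferentiableAt ℝ f p) :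
    pdx f p = fderiv ℝ f p (1, 0) := (hasDerivAt_slice_x f p hf).deriv

lemma pdt_eq_fderiv (f : ℝ × ℝ → ℂ) (p : ℝ × ℝ) (hf : DifferentiableAt ℝ f p) :
    pdt f p = fderiv ℝ f p (0, 1) := (hasDerivAt_slice_t f p hf).deriv

lemma contDiff_pdx (f : ℝ × ℝ → ℂ) (hf : ContDiff ℝ (⊤ : ℕ∞) f) : ContDiff ℝ (⊤ : ℕ∞) (pdx f) := by
  have h : pdx f = fun p => fderiv ℝ f p (1, 0) :=
    funext fun p => pdx_eq_fderiv f p (hf.differentiable (by simp) p)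
  rw [h]
  exact (hf.fderiv_right (by simp)).clm_apply contDiff_const

lemma pdt_pdx_comm (f : ℝ × ℝ → ℂ) (hf : ContDiff ℝ (⊤ : ℕ∞) f) : pdt (pdx f) = pdx (pdt f) := by
  funext p
  have hdf : Differentiable ℝ f := hf.differentiable (by simp)
  have hfd : ContDiff ℝ (⊤ : ℕ∞) (fderiv ℝ f) := hf.fderiv_right (by simp)
  have h1 : pdx f = fun p => fderiv ℝ f p (1, 0) :=
    funext fun p => pdx_eq_fderiv f p (hdf p)
  have h2 : pdt f = fun p => fderiv ℝ f p (0, 1) :=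
    funext fun p => pdt_eq_fderiv f p (hdf p)
  have hdx : DifferentiableAt ℝ (fun p' => fderiv ℝ f p' ((1 : ℝ), (0 : ℝ))) p :=
    (hfd.differentiable (by simp) p).clm_apply (differentiableAt_const _)
  have hdt : DifferentiableAt ℝ (fun p' => fderiv ℝ f p' ((0 : ℝ), (1 : ℝ))) p :=
    (hfd.differentiable (by simp) p).clm_apply (differentiableAt_const _)
  rw [h1, h2, pdt_eq_fderiv _ _ hdx, pdx_eq_fderiv _ _ hdt,
    fderiv_clm_apply (hfd.differentiable (by simp) p) (differentiableAt_const _),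
    fderiv_clm_apply (hfd.differentiable (by simp) p) (differentiableAt_const _)]
  simp only [fderiv_const_apply, Pi.zero_apply, ContinuousLinearMap.comp_zero, ContinuousLinearMap.zero_apply, zero_add,
    ContinuousLinearMap.add_apply, ContinuousLinearMap.flip_apply]
  exact (hf.contDiffAt.isSymmSndFDerivAt (by rw [minSmoothness_of_isRCLikeNormedField]; exact WithTop.coe_le_coe.mpr le_top)) _ _


set_option maxHeartbeats 1600000 in
/-- the second conservation law of the nonlocal equation (E). -/
theorem second_conservation_law
    (ρ : ℝ) (q : ℝ × ℝ → ℂ) (hq : ContDiff ℝ (⊤ : ℕ∞) q) (hE : NonlocalE q ρ) :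
    ∀ p : ℝ × ℝ,
      pdt (fun p' => q p' * L3 q ρ p') p
        = pdx (fun p' =>
            (-pdx (pdx q) p' - 3 * I * q p' * tq q p' * pdx q p'
                + (3 / 2) * (q p') ^ 3 * (tq q p') ^ 2
                - 2 * (ρ : ℂ) * (q p') ^ 2 * tq q p' - 4 * (ρ : ℂ) ^ 2 * q p') * L3 q ρ p'
            + (2 * I * pdx q p' - 2 * (q p') ^ 2 * tq q p' - 4 * (ρ : ℂ) * q p') * L5 q ρ p'
            + 4 * q p' * L7 q ρ p') p := by
  intro p
  have hqd : Differentiable ℝ q := hq.differentiable (by simp)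
  have hc1 : ContDiff ℝ (⊤ : ℕ∞) (pdx q) := contDiff_pdx q hq
  have hd1 : Differentiable ℝ (pdx q) := hc1.differentiable (by simp)
  have hc2 : ContDiff ℝ (⊤ : ℕ∞) (pdx (pdx q)) := contDiff_pdx _ hc1
  have hd2 : Differentiable ℝ (pdx (pdx q)) := hc2.differentiable (by simp)
  have hc3 : ContDiff ℝ (⊤ : ℕ∞) (pdx (pdx (pdx q))) := contDiff_pdx _ hc2
  have hd3 : Differentiable ℝ (pdx (pdx (pdx q))) := hc3.differentiable (by simp)
  have eq0 : ∀ (x c : ℝ), deriv (fun x' => q (x', c)) x = pdx q (x, c) := fun _ _ => rfl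
  have eq0n : ∀ (x c : ℝ), deriv (fun x' : ℝ => q (-x', c)) x = -pdx q (-x, c) := by
    intro x c; rw [deriv_comp_neg (f := fun u => q (u, c))]; rfl
  have eq1 : ∀ (x c : ℝ), deriv (fun x' => pdx q (x', c)) x = pdx (pdx q) (x, c) :=
    fun _ _ => rfl
  have eq1n : ∀ (x c : ℝ), deriv (fun x' : ℝ => pdx q (-x', c)) x = -pdx (pdx q) (-x, c) := by
    intro x c; rw [deriv_comp_neg (f := fun u => pdx q (u, c))]; rfl
  have eq2 : ∀ (x c : ℝ), deriv (fun x' => pdx (pdx q) (x', c)) x = pdx (pdx (pdx q)) (x, c) :=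
    fun _ _ => rfl
  have eq2n : ∀ (x c : ℝ), deriv (fun x' : ℝ => pdx (pdx q) (-x', c)) x
      = -pdx (pdx (pdx q)) (-x, c) := by
    intro x c; rw [deriv_comp_neg (f := fun u => pdx (pdx q) (u, c))]; rfl
  have eq3 : ∀ (x c : ℝ), deriv (fun x' => pdx (pdx (pdx q)) (x', c)) x
      = pdx (pdx (pdx (pdx q))) (x, c) := fun _ _ => rfl
  have eq3n : ∀ (x c : ℝ), deriv (fun x' : ℝ => pdx (pdx (pdx q)) (-x', c)) x
      = -pdx (pdx (pdx (pdx q))) (-x, c) := by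
    intro x c; rw [deriv_comp_neg (f := fun u => pdx (pdx (pdx q)) (u, c))]; rfl
  have et0 : ∀ (c t : ℝ), deriv (fun t' => q (c, t')) t = pdt q (c, t) := fun _ _ => rfl
  have et0n : ∀ (c t : ℝ), deriv (fun t' : ℝ => q (c, -t')) t = -pdt q (c, -t) := by
    intro c t; rw [deriv_comp_neg (f := fun u => q (c, u))]; rfl
  have et1 : ∀ (c t : ℝ), deriv (fun t' => pdx q (c, t')) t = pdt (pdx q) (c, t) :=
    fun _ _ => rfl
  have et1n : ∀ (c t : ℝ), deriv (fun t' : ℝ => pdx q (c, -t')) t = -pdt (pdx q) (c, -t) := by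
    intro c t; rw [deriv_comp_neg (f := fun u => pdx q (c, u))]; rfl
  have hGx : ∀ a b : ℝ,
      pdx (fun p' => q p' * tq q p' * pdx q p' + I / 2 * q p' ^ 3 * tq q p' ^ 2) (a, b)
        = (1 : ℂ) * (pdx q (a, b)) ^ 2 * (q (-a, -b)) + (1 : ℂ) * (q (a, b)) * (pdx (pdx q) (a, b)) * (q (-a, -b)) + (-1 : ℂ) * (q (a, b)) * (pdx q (a, b)) * (pdx q (-a, -b)) + (3 / 2 : ℂ) * I * (q (a, b)) ^ 2 * (pdx q (a, b)) * (q (-a, -b)) ^ 2 + (-1 : ℂ) * I * (q (a, b)) ^ 3 * (q (-a, -b)) * (pdx q (-a, -b)) := by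
    intro a b
    rw [pdx_mk]
    simp only [tq]
    simp only [pow_succ, pow_zero, one_mul]
    simp (disch := fun_prop) only [deriv_fun_add, deriv_fun_sub, deriv_fun_mul, deriv_const_mul, deriv_const, deriv_const', deriv.fun_neg, eq0, eq0n, eq1, eq1n, eq2, eq2n, eq3, eq3n]
    ring
  have hw : ∀ a b : ℝ, pdt q (a, b) = (1 : ℂ) * I ^ 2 * (pdx (pdx (pdx q)) (a, b)) + (2 : ℂ) * I * (ρ : ℂ) * (pdx (pdx q) (a, b)) + (4 : ℂ) * I ^ 2 * (ρ : ℂ) ^ 2 * (pdx q (a, b)) + (-3 : ℂ) * I * (pdx q (a, b)) ^ 2 * (q (-a, -b)) + (-8 : ℂ) * I * (ρ : ℂ) ^ 2 * (q (a, b)) + (8 : ℂ) * I * (ρ : ℂ) ^ 3 * (q (a, b)) + (-3 : ℂ) * I * (q (a, b)) * (pdx (pdx q) (a, b)) * (q (-a, -b)) + (3 : ℂ) * I * (q (a, b)) * (pdx q (a, b)) * (pdx q (-a, -b)) + (10 : ℂ) * I ^ 2 * (ρ : ℂ) * (q (a, b)) * (pdx q (a, b)) * (q (-a, -b)) + (-2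 : ℂ) * I ^ 2 * (ρ : ℂ) * (q (a, b)) ^ 2 * (pdx q (-a, -b)) + (4 : ℂ) * I * (ρ : ℂ) ^ 2 * (q (a, b)) ^ 2 * (q (-a, -b)) + (-9 / 2 : ℂ) * I ^ 2 * (q (a, b)) ^ 2 * (pdx q (a, b)) * (q (-a, -b)) ^ 2 + (3 : ℂ) * I ^ 2 * (q (a, b)) ^ 3 * (q (-a, -b)) * (pdx q (-a, -b)) + (-3 : ℂ) * I * (ρ : ℂ) * (q (a, b)) ^ 3 * (q (-a, -b)) ^ 2 := by
    intro a b
    have h := hE (a, b)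
    simp only [NonlocalEAt] at h
    rw [hGx] at h
    simp only [tq, hq1] at h
    linear_combination (-I) * h + pdt q (a, b) * Complex.I_sq
  have hw1 : ∀ a b : ℝ, pdt (pdx q) (a, b) = (1 : ℂ) * I ^ 2 * (pdx (pdx (pdx (pdx q))) (a, b)) + (2 : ℂ) * I * (ρ : ℂ) * (pdx (pdx (pdx q)) (a, b)) + (4 : ℂ) * I ^ 2 * (ρ : ℂ) ^ 2 * (pdx (pdx q) (a, b)) + (-8 : ℂ) * I * (ρ : ℂ) ^ 2 * (pdx q (a, b)) + (8 : ℂ) * I * (ρ : ℂ) ^ 3 * (pdx q (a, b)) + (-9 : ℂ) * I * (pdx q (a, b)) * (pdx (pdx q) (a, b)) * (q (-a, -b)) + (6 : ℂ) * I * (pdx q (a, b)) ^ 2 * (pdx q (-a, -b)) + (10 : ℂ) * I ^ 2 * (ρ : ℂ) * (pdx q (a, b)) ^ 2 * (q (-a, -b)) + (-3 : ℂ) * I * (q (a, b)) * (pdx (pdx (pdx q)) (a, b)) * (q (-a, -b)) + (6 : ℂ) * I * (q (a, b)) * (pdx (pdx q) (a, b)) * (pdx q (-a, -b)) + (10 :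 ℂ) * I ^ 2 * (ρ : ℂ) * (q (a, b)) * (pdx (pdx q) (a, b)) * (q (-a, -b)) + (-3 : ℂ) * I * (q (a, b)) * (pdx q (a, b)) * (pdx (pdx q) (-a, -b)) + (-14 : ℂ) * I ^ 2 * (ρ : ℂ) * (q (a, b)) * (pdx q (a, b)) * (pdx q (-a, -b)) + (8 : ℂ) * I * (ρ : ℂ) ^ 2 * (q (a, b)) * (pdx q (a, b)) * (q (-a, -b)) + (-9 : ℂ) * I ^ 2 * (q (a, b)) * (pdx q (a, b)) ^ 2 * (q (-a, -b)) ^ 2 + (2 : ℂ) * I ^ 2 * (ρ : ℂ) * (q (a, b)) ^ 2 * (pdx (pdx q) (-a, -b)) + (-4 : ℂ) * I * (ρ : ℂ) ^ 2 * (q (a, b)) ^ 2 * (pdx q (-a, -b)) + (-9 / 2 : ℂ) * I ^ 2 * (q (a, b)) ^ 2 * (pdx (pdx q) (a, b)) * (q (-a, -b)) ^ 2 + (18 : ℂ) * I ^ 2 * (q (a, b)) ^ 2 * (pdx q (a, b)) * (q (-a, -b)) * (pdx q (-a, -b)) + (-9 : ℂ) * I * (ρ : ℂ) * (q (a, b))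 ^ 2 * (pdx q (a, b)) * (q (-a, -b)) ^ 2 + (-3 : ℂ) * I ^ 2 * (q (a, b)) ^ 3 * (pdx q (-a, -b)) ^ 2 + (-3 : ℂ) * I ^ 2 * (q (a, b)) ^ 3 * (q (-a, -b)) * (pdx (pdx q) (-a, -b)) + (6 : ℂ) * I * (ρ : ℂ) * (q (a, b)) ^ 3 * (q (-a, -b)) * (pdx q (-a, -b)) := by
    intro a b
    rw [pdt_pdx_comm q hq, pdx_mk]
    simp only [hw]
    simp only [pow_succ, pow_zero, one_mul]
    simp (disch := fun_prop) only [deriv_fun_add, deriv_fun_sub, deriv_fun_mul, deriv_const_mul, deriv_const, deriv_const', deriv.fun_neg, eq0, eq0n, eq1, eq1n, eq2, eq2n, eq3, eq3n]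
    ring
  have hL5x : ∀ a b : ℝ, pdx (L5 q ρ) (a, b) = (-1 / 8 : ℂ) * I * (pdx (pdx (pdx q)) (-a, -b)) + (-1 / 2 : ℂ) * (ρ : ℂ) * (pdx (pdx q) (-a, -b)) + (1 / 2 : ℂ) * I * (ρ : ℂ) ^ 2 * (pdx q (-a, -b)) + (1 / 16 : ℂ) * (pdx (pdx q) (a, b)) * (q (-a, -b)) ^ 2 + (-3 / 8 : ℂ) * (pdx q (a, b)) * (q (-a, -b)) * (pdx q (-a, -b)) + (3 / 8 : ℂ) * I * (ρ : ℂ) * (pdx q (a, b)) * (q (-a, -b)) ^ 2 + (1 / 4 : ℂ) * (q (a, b)) * (pdx q (-a, -b)) ^ 2 + (1 / 4 : ℂ) * (q (a, b)) * (q (-a, -b)) * (pdx (pdx q) (-a, -b)) + (-3 / 4 : ℂ) * I * (ρ : ℂ) * (q (a, b)) * (q (-a, -b)) * (pdx q (-a, -b)) + (-1 / 8 : ℂ) * I * (q (a, b)) * (pdx q (a, b)) * (q (-a, -b)) ^ 3 + (3 / 16 : ℂ) * I * (q (a, b)) ^ 2 * (q (-a, -b)) ^ 2 * (pdx q (-a,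 -b)) := by
    intro a b
    rw [pdx_mk]
    simp only [L5, tq, hq1, hq2]
    simp only [pow_succ, pow_zero, one_mul]
    simp (disch := fun_prop) only [deriv_fun_add, deriv_fun_sub, deriv_fun_mul, deriv_const_mul, deriv_const, deriv_const', deriv.fun_neg, eq0, eq0n, eq1, eq1n, eq2, eq2n, eq3, eq3n]
    ring
  obtain ⟨x, t⟩ := p
  rw [pdt_mk, pdx_mk]
  simp only [L1, L3, L5, L7, hL5x, tq, hq1, hq2]
  simp only [pow_succ, pow_zero, one_mul]
  simp (disch := fun_prop) only [deriv_fun_add, deriv_fun_sub, deriv_fun_mul, deriv_const_mul, deriv_const, deriv_const', deriv.fun_neg, eq0, eq0n, eq1, eq1n, eq2, eq2n, eq3, eq3n, et0, et0n, et1, et1n]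
  simp only [hw, hw1]
  simp only [neg_neg]
  linear_combination ((1 / 4 : ℂ) * (pdx (pdx (pdx q)) (x, t)) * (pdx q (-x, -t)) + (-1 / 2 : ℂ) * I * (ρ : ℂ) * (pdx (pdx (pdx q)) (x, t)) * (q (-x, -t)) + (-1 / 4 : ℂ) * (pdx (pdx q) (x, t)) * (pdx (pdx q) (-x, -t)) + (1 / 2 : ℂ) * I * (ρ : ℂ) * (pdx q (x, t)) * (pdx (pdx q) (-x, -t)) + (3 : ℂ) * (ρ : ℂ) ^ 2 * (pdx q (x, t)) * (pdx q (-x, -t)) + (-4 : ℂ) * I * (ρ : ℂ) ^ 3 * (pdx q (x, t)) * (q (-x, -t)) + (1 / 4 : ℂ) * (ρ : ℂ) * (pdx q (x, t)) ^ 2 * (q (-x, -t)) ^ 2 + (-3 : ℂ) * (ρ : ℂ) ^ 2 * (q (x, t)) * (pdx (pdx q) (-x, -t)) + (4 : ℂ) * I * (ρ : ℂ) ^ 3 * (q (x, t)) * (pdx q (-x, -t)) + (1 / 4 : ℂ) * I * (q (x, t)) * (pdx (pdx (pdx q)) (x, t)) * (q (-x, -t)) ^ 2 + (1 / 4 : ℂ)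 * (ρ : ℂ) * (q (x, t)) * (pdx (pdx q) (x, t)) * (q (-x, -t)) ^ 2 + (-1 / 2 : ℂ) * I * (q (x, t)) * (pdx q (x, t)) * (q (-x, -t)) * (pdx (pdx q) (-x, -t)) + (1 / 2 : ℂ) * (ρ : ℂ) * (q (x, t)) * (pdx q (x, t)) * (q (-x, -t)) * (pdx q (-x, -t)) + (1 : ℂ) * I * (ρ : ℂ) ^ 2 * (q (x, t)) * (pdx q (x, t)) * (q (-x, -t)) ^ 2 + (1 / 4 : ℂ) * (q (x, t)) * (pdx q (x, t)) ^ 2 * (q (-x, -t)) ^ 3 + (1 / 4 : ℂ) * I * (q (x, t)) ^ 2 * (pdx q (-x, -t)) * (pdx (pdx q) (-x, -t)) + (-1 / 2 : ℂ) * (ρ : ℂ) * (q (x, t)) ^ 2 * (pdx q (-x, -t)) ^ 2 + (-1 / 2 : ℂ) * (ρ : ℂ) * (q (x, t)) ^ 2 * (q (-x, -t)) * (pdx (pdx q) (-x, -t)) + (-1 : ℂ) * I * (ρ : ℂ) ^ 2 * (q (x, t)) ^ 2 * (q (-x, -t)) * (pdx q (-x, -t)) + (1 / 8 : ℂ) *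 (q (x, t)) ^ 2 * (pdx (pdx q) (x, t)) * (q (-x, -t)) ^ 3 + (-3 : ℂ) * (q (x, t)) ^ 2 * (pdx q (x, t)) * (q (-x, -t)) ^ 2 * (pdx q (-x, -t)) + (3 : ℂ) * I * (ρ : ℂ) * (q (x, t)) ^ 2 * (pdx q (x, t)) * (q (-x, -t)) ^ 3 + (7 / 4 : ℂ) * (q (x, t)) ^ 3 * (q (-x, -t)) * (pdx q (-x, -t)) ^ 2 + (7 / 8 : ℂ) * (q (x, t)) ^ 3 * (q (-x, -t)) ^ 2 * (pdx (pdx q) (-x, -t)) + (-3 : ℂ) * I * (ρ : ℂ) * (q (x, t)) ^ 3 * (q (-x, -t)) ^ 2 * (pdx q (-x, -t)) + (-5 / 4 : ℂ) * I * (q (x, t)) ^ 3 * (pdx q (x, t)) * (q (-x, -t)) ^ 4 + (5 / 4 : ℂ) * I * (q (x, t)) ^ 4 * (q (-x, -t)) ^ 3 * (pdx q (-x, -t))) * Complex.I_sq
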